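/- Let Σ be a finite set of unary functional dependencies, ID[1] rules, and ID[2] rules over a signature σ, and τ an ID[2] rule. Let σ₊ be obtained from σ by adding, to each relation R, a fresh position R₊^{δ,1} for each ID[1] rule δ: R^p ⊆ S^q of Σ and a fresh position R₊^{δ,2} for each ID[1] rule δ: S^q ⊆ R^p of Σ. Encode each ID[1] rule δ: R^p ⊆ S^q of Σ as the ID[2] rule R₊^p R₊^{δ,1} ⊆ S₊^q S₊^{δ,2}, and rewrite the ID[2] rules and UFDs of Σ verbatim onto σ₊; let Σ' be the resulting set. Then Σ ⊨ τ iff Σ' ⊨ τ (with τ read over σ₊). Consequently, the entailment problem for UFD ∧ ID[1] ∧ ID[2] and ID[2] reduces to the entailment problem for UFD ∧ ID[2] and ID[2]. -/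

import Mathlib

/-- A relational signature, with a type of positions for each relation. -/
structure PSig : Type 1 where
  Rel : Type
  Pos : Rel → Type

/-- An interpretation: tuples are functions from positions to the domain. -/
structure PInterp (σ : PSig) : Type 1 where
  Dom : Type
  rel : ∀ R : σ.Rel, Set (σ.Pos R → Dom)

/-- A unary functional dependency `R^p → R^q`. -/
structure PUFD (σ : PSig) where
  R : σ.Rel
  p : σ.Pos R
  q : σ.Pos R

def satPUFD {σ : PSig} (I : PInterp σ) (φ : PUFD σ) : Prop :=
  ∀ t ∈ I.rel φ.R, ∀ t' ∈ I.rel φ.R, t φ.p = t' φ.p → t φ.q = t' φ.q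

/-- A frontier-one inclusion dependency `R^p ⊆ S^q`. -/
structure PID1 (σ : PSig) where
  R : σ.Rel
  S : σ.Rel
  p : σ.Pos R
  q : σ.Pos S

def satPID1 {σ : PSig} (I : PInterp σ) (δ : PID1 σ) : Prop :=
  ∀ t ∈ I.rel δ.R, ∃ u ∈ I.rel δ.S, u δ.q = t δ.p

/-- A frontier-two inclusion dependency `R^a R^b ⊆ S^c S^d` (with `a ≠ b`, `c ≠ d`,
so no position is repeated in the body atom or in the head atom). -/
structure PID2 (σ : PSig) where
  R : σ.Rel
  S : σ.Rel
  a : σ.Pos R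
  b : σ.Pos R
  c : σ.Pos S
  d : σ.Pos S
  hab : a ≠ b
  hcd : c ≠ d

def satPID2 {σ : PSig} (I : PInterp σ) (δ : PID2 σ) : Prop :=
  ∀ t ∈ I.rel δ.R, ∃ u ∈ I.rel δ.S, u δ.c = t δ.a ∧ u δ.d = t δ.b

/-- The signature σ₊: each relation `R` gets one fresh position `R₊^{δ,1}` for each
ID[1] rule `δ : R^p ⊆ S^q` of `Δ₁` whose body relation is `R`, and one fresh
position `R₊^{δ,2}` for each ID[1] rule `δ : S^q ⊆ R^p` of `Δ₁` whose head
relation is `R`. -/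
def sigPlus (σ : PSig) (Δ₁ : Set (PID1 σ)) : PSig :=
  ⟨σ.Rel, fun R => σ.Pos R ⊕
    ({δ : PID1 σ // δ ∈ Δ₁ ∧ δ.R = R} ⊕ {δ : PID1 σ // δ ∈ Δ₁ ∧ δ.S = R})⟩

/-- Verbatim rewriting of a UFD of σ onto σ₊. -/
def liftUFD {σ : PSig} (Δ₁ : Set (PID1 σ)) (φ : PUFD σ) : PUFD (sigPlus σ Δ₁) :=
  ⟨φ.R, Sum.inl φ.p, Sum.inl φ.q⟩

/-- Verbatim rewriting of an ID[2] rule of σ onto σ₊. -/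
def liftID2 {σ : PSig} (Δ₁ : Set (PID1 σ)) (δ : PID2 σ) : PID2 (sigPlus σ Δ₁) :=
  ⟨δ.R, δ.S, Sum.inl δ.a, Sum.inl δ.b, Sum.inl δ.c, Sum.inl δ.d,
   fun h => δ.hab (Sum.inl.inj h), fun h => δ.hcd (Sum.inl.inj h)⟩

/-- Encoding of an ID[1] rule `δ : R^p ⊆ S^q` of `Δ₁` as the ID[2] rule
`R₊^p R₊^{δ,1} ⊆ S₊^q S₊^{δ,2}` on σ₊. -/
def encodeID1 {σ : PSig} (Δ₁ : Set (PID1 σ)) (δ : PID1 σ) (hδ : δ ∈ Δ₁) :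
    PID2 (sigPlus σ Δ₁) :=
  ⟨δ.R, δ.S, Sum.inl δ.p, Sum.inr (Sum.inl ⟨δ, hδ, rfl⟩),
   Sum.inl δ.q, Sum.inr (Sum.inr ⟨δ, hδ, rfl⟩),
   fun h => Sum.inl_ne_inr h, fun h => Sum.inl_ne_inr h⟩

/-!
A model `I'` of `Σ'` restricts, by forgetting the fresh positions, to a model of `Σ`: the encoded
rule of `δ : R^p ⊆ S^q` in particular carries `R^p` into `S^q`. Conversely a model `I` of `Σ`
becomes a model of `Σ'` by admitting every filling of the fresh positions; the encoded rule is then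
witnessed by a head tuple whose fresh positions all copy the value at `R₊^{δ,1}` of the body tuple.
Both constructions leave the original positions untouched, so `τ` transfers in each direction.
-/

section

variable {σ : PSig} {Δ₁ : Set (PID1 σ)}

namespace PInterp

def restrict (I : PInterp (sigPlus σ Δ₁)) : PInterp σ :=
  ⟨I.Dom, fun R => (fun t => t ∘ Sum.inl) '' I.rel R⟩

def extend (I : PInterp σ) (Δ₁ : Set (PID1 σ)) : PInterp (sigPlus σ Δ₁) :=
  ⟨I.Dom, fun R => (fun t => t ∘ Sum.inl) ⁻¹' I.rel R⟩

end PInterp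

theorem satPUFD_restrict_iff (I : PInterp (sigPlus σ Δ₁)) (φ : PUFD σ) :
    satPUFD I.restrict φ ↔ satPUFD I (liftUFD Δ₁ φ) := by
  constructor
  · intro h t ht t' ht'
    exact h _ ⟨t, ht, rfl⟩ _ ⟨t', ht', rfl⟩
  · rintro h _ ⟨t, ht, rfl⟩ _ ⟨t', ht', rfl⟩
    exact h t ht t' ht'

theorem satPID2_restrict_iff (I : PInterp (sigPlus σ Δ₁)) (δ : PID2 σ) :
    satPID2 I.restrict δ ↔ satPID2 I (liftID2 Δ₁ δ) := by
  constructor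
  · intro h t ht
    obtain ⟨_, ⟨u, hu, rfl⟩, hc, hd⟩ := h _ ⟨t, ht, rfl⟩
    exact ⟨u, hu, hc, hd⟩
  · rintro h _ ⟨t, ht, rfl⟩
    obtain ⟨u, hu, hc, hd⟩ := h t ht
    exact ⟨_, ⟨u, hu, rfl⟩, hc, hd⟩

theorem satPID1_restrict_of_encodeID1 {I : PInterp (sigPlus σ Δ₁)} {δ : PID1 σ} {hδ : δ ∈ Δ₁}
    (h : satPID2 I (encodeID1 Δ₁ δ hδ)) : satPID1 I.restrict δ := by
  rintro _ ⟨t, ht, rfl⟩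
  obtain ⟨u, hu, hq, -⟩ := h t ht
  exact ⟨_, ⟨u, hu, rfl⟩, hq⟩

theorem satPUFD_extend_liftUFD {I : PInterp σ} {φ : PUFD σ} (h : satPUFD I φ) :
    satPUFD (I.extend Δ₁) (liftUFD Δ₁ φ) :=
  fun _ ht _ ht' => h _ ht _ ht'

theorem satPID2_extend_liftID2_iff (I : PInterp σ) (δ : PID2 σ) :
    satPID2 (I.extend Δ₁) (liftID2 Δ₁ δ) ↔ satPID2 I δ := by
  constructor
  · intro h t ht
    obtain ⟨u, hu, hc, hd⟩ := h (Sum.elim t fun _ => t δ.a) ht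
    exact ⟨_, hu, hc, hd⟩
  · intro h t ht
    obtain ⟨u, hu, hc, hd⟩ := h _ ht
    exact ⟨Sum.elim u fun _ => t (Sum.inl δ.a), hu, hc, hd⟩

theorem satPID2_extend_encodeID1 {I : PInterp σ} {δ : PID1 σ} (hδ : δ ∈ Δ₁)
    (h : satPID1 I δ) : satPID2 (I.extend Δ₁) (encodeID1 Δ₁ δ hδ) := by
  intro t ht
  obtain ⟨u, hu, hq⟩ := h _ ht
  exact ⟨Sum.elim u fun _ => t (Sum.inr (Sum.inl ⟨δ, hδ, rfl⟩)), hu, hq, rfl⟩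

end

theorem id1_elimination_general (σ : PSig) (Φ : Set (PUFD σ)) (Δ₁ : Set (PID1 σ))
    (Δ₂ : Set (PID2 σ)) (τ : PID2 σ) :
    (∀ I : PInterp σ,
        ((∀ φ ∈ Φ, satPUFD I φ) ∧ (∀ δ ∈ Δ₁, satPID1 I δ) ∧
         (∀ δ ∈ Δ₂, satPID2 I δ)) → satPID2 I τ)
    ↔
    (∀ I' : PInterp (sigPlus σ Δ₁),
        ((∀ φ ∈ Φ, satPUFD I' (liftUFD Δ₁ φ)) ∧
         (∀ δ : PID1 σ, ∀ hδ : δ ∈ Δ₁, satPID2 I' (encodeID1 Δ₁ δ hδ)) ∧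
         (∀ δ ∈ Δ₂, satPID2 I' (liftID2 Δ₁ δ))) →
        satPID2 I' (liftID2 Δ₁ τ)) := by
  constructor
  · rintro h I ⟨hUFD, hID1, hID2⟩
    refine (satPID2_restrict_iff I τ).1 (h I.restrict ⟨?_, ?_, ?_⟩)
    · exact fun φ hφ => (satPUFD_restrict_iff I φ).2 (hUFD φ hφ)
    · exact fun δ hδ => satPID1_restrict_of_encodeID1 (hID1 δ hδ)
    · exact fun δ hδ => (satPID2_restrict_iff I δ).2 (hID2 δ hδ)
  · rintro h I ⟨hUFD, hID1, hID2⟩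
    refine (satPID2_extend_liftID2_iff I τ).1 (h (I.extend Δ₁) ⟨?_, ?_, ?_⟩)
    · exact fun φ hφ => satPUFD_extend_liftUFD (hUFD φ hφ)
    · exact fun δ hδ => satPID2_extend_encodeID1 hδ (hID1 δ hδ)
    · exact fun δ hδ => (satPID2_extend_liftID2_iff I δ).2 (hID2 δ hδ)

/-- for `Σ` consisting of UFDs `Φ`, ID[1] rules `Δ₁` and ID[2] rules
`Δ₂` over σ and an ID[2] rule `τ`, encoding each ID[1] rule `δ : R^p ⊆ S^q` as the
ID[2] rule `R₊^p R₊^{δ,1} ⊆ S₊^q S₊^{δ,2}` over σ₊ and rewriting the other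
constraints verbatim yields `Σ'` with `Σ ⊨ τ` iff `Σ' ⊨ τ`. (Consequently,
entailment for UFD ∧ ID[1] ∧ ID[2] and ID[2] reduces to entailment for
UFD ∧ ID[2] and ID[2].) -/
theorem id1_elimination (σ : PSig) (Φ : Set (PUFD σ)) (Δ₁ : Set (PID1 σ))
    (Δ₂ : Set (PID2 σ)) (hΦ : Φ.Finite) (hΔ₁ : Δ₁.Finite) (hΔ₂ : Δ₂.Finite)
    (τ : PID2 σ) :
    (∀ I : PInterp σ,
        ((∀ φ ∈ Φ, satPUFD I φ) ∧ (∀ δ ∈ Δ₁, satPID1 I δ) ∧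
         (∀ δ ∈ Δ₂, satPID2 I δ)) → satPID2 I τ)
    ↔
    (∀ I' : PInterp (sigPlus σ Δ₁),
        ((∀ φ ∈ Φ, satPUFD I' (liftUFD Δ₁ φ)) ∧
         (∀ δ : PID1 σ, ∀ hδ : δ ∈ Δ₁, satPID2 I' (encodeID1 Δ₁ δ hδ)) ∧
         (∀ δ ∈ Δ₂, satPID2 I' (liftID2 Δ₁ δ))) →
        satPID2 I' (liftID2 Δ₁ τ)) :=
  id1_elimination_general σ Φ Δ₁ Δ₂ τ
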